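/- Let f : ℝ → ℝ be continuous with compact support, F f continuous, and ∫_ℝ |F f(ξ)|²(1+|ξ|) dξ < ∞. Fix 0 < α < 1. For each M > 0, if N_n ≥ M n^{1-α} eventually, then limsup_n (1/n^{1-α}) ∑_{|k| > N_n} |F f(k / n^{1-α})|² ≤ ∫_{|ξ| > M} |F f(ξ)|² dξ. -/

import Mathlib

open MeasureTheory Real Complex Filter Topology

/-- The Fourier transform with normalization `F f(ω) = (1/2π) ∫ e^{-ixω} f(x) dx`. -/
noncomputable def fourierT (f : ℝ → ℝ) (ω : ℝ) : ℂ :=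
  (1 / (2 * Real.pi)) * ∫ x : ℝ, Complex.exp (-(x * ω) * Complex.I) * (f x : ℂ)

/-!
Write `G = ‖F f‖²`. Because `f` has compact support, both `F f` and its derivative
`-i F (x f)` are square integrable: for a period `T` whose window contains the support, Parseval's
identity for Fourier series makes `∑ₖ G (t + k / T)` independent of `t`, and integrating over
`t ∈ (0, 1 / T)` bounds `∫ G`. Hence `G' = 2 ⟪F f, (F f)'⟫` is integrable.
By the fundamental theorem of calculus, `G (k / L) / L` exceeds the integral of `G` over the
adjacent cell of length `1 / L` on the side away from the origin by at most `(1 / L) ∫_cell |G'|`.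
For `|k| > N ≥ M L` these cells are disjoint and lie in `{|ξ| > M}`, so the tail is at most
`∫_{|ξ| > M} G + (1 / L) ∫ |G'|`, and the error term vanishes as `L = n ^ (1 - α) → ∞`.
-/

open FourierTransform Set Function
open scoped ENNReal

theorem mul_le_setIntegral_Ioo_add {G : ℝ → ℝ} (hG : Differentiable ℝ G) {a b c : ℝ}
    (hG' : IntegrableOn (deriv G) (Icc a b)) (hc : c ∈ Icc a b) :
    (b - a) * G c ≤ (∫ x in Ioo a b, G x) + (b - a) * ∫ x in Ioo a b, |deriv G x| := by
  have hab : a ≤ b := hc.1.trans hc.2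
  have hvar : ∀ x ∈ Ioo a b, G c ≤ G x + ∫ y in Ioo a b, |deriv G y| := by
    intro x hx
    have hsub : uIcc x c ⊆ Icc a b := uIcc_subset_Icc (Ioo_subset_Icc_self hx) hc
    have hftc : ∫ y in x..c, deriv G y = G c - G x :=
      intervalIntegral.integral_eq_sub_of_hasDerivAt (fun y _ => (hG y).hasDerivAt)
        ((hG'.mono_set hsub).intervalIntegrable)
    have hle : ∫ y in uIoc x c, |deriv G y| ≤ ∫ y in Ioo a b, |deriv G y| := by
      rw [← integral_Icc_eq_integral_Ioo]
      exact setIntegral_mono_set hG'.abs (Eventually.of_forall fun _ => abs_nonneg _)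
        (Eventually.of_forall (uIoc_subset_uIcc.trans hsub))
    have hnorm := intervalIntegral.norm_integral_le_integral_norm_uIoc (f := deriv G) (a := x)
      (b := c) (μ := volume)
    simp only [hftc, Real.norm_eq_abs] at hnorm
    linarith [le_abs_self (G c - G x)]
  have hGi : IntegrableOn G (Ioo a b) :=
    hG.continuous.integrableOn_Icc.mono_set Ioo_subset_Icc_self
  calc (b - a) * G c = ∫ _ in Ioo a b, G c := by
        rw [setIntegral_const, Real.volume_real_Ioo_of_le hab, smul_eq_mul]
    _ ≤ ∫ x in Ioo a b, (G x + ∫ y in Ioo a b, |deriv G y|) :=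
        setIntegral_mono_on (integrableOn_const (by simp))
          (hGi.add (integrableOn_const (by simp))) measurableSet_Ioo hvar
    _ = (∫ x in Ioo a b, G x) + (b - a) * ∫ x in Ioo a b, |deriv G x| := by
        rw [integral_add hGi (integrableOn_const (by simp)), setIntegral_const,
          Real.volume_real_Ioo_of_le hab, smul_eq_mul]

theorem sum_setIntegral_le_setIntegral {ι : Type*} {f : ℝ → ℝ} (hf0 : ∀ x, 0 ≤ f x)
    (hf : Integrable f) {S : ι → Set ℝ} (hS : ∀ i, MeasurableSet (S i))
    (hdisj : Pairwise (Disjoint on S)) {T : Set ℝ} (hST : ∀ i, S i ⊆ T) (s : Finset ι) :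
    ∑ i ∈ s, ∫ x in S i, f x ≤ ∫ x in T, f x := by
  rw [← integral_biUnion_finset s (fun i _ => hS i) (fun i _ j _ hij => hdisj hij)
    (fun i _ => hf.integrableOn)]
  exact setIntegral_mono_set hf.integrableOn (Eventually.of_forall hf0)
    (Eventually.of_forall (iUnion₂_subset fun i _ => hST i))

/-- `k / L` is the endpoint farther from `0` of the cell
`Ioo (outerCell k / L) ((outerCell k + 1) / L)`. -/
def outerCell (k : ℤ) : ℤ := if 0 < k then k - 1 else k

theorem outerCell_injOn : InjOn outerCell {k | k ≠ 0} := by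
  intro k hk k' hk' h
  simp only [outerCell] at h
  split_ifs at h <;> simp_all <;> omega

theorem div_mem_Icc_outerCell {L : ℝ} (hL : 0 < L) (k : ℤ) :
    (k : ℝ) / L ∈ Icc (outerCell k / L) ((outerCell k + 1) / L) := by
  unfold outerCell
  split_ifs <;> push_cast <;> constructor <;> gcongr <;> linarith

theorem Ioo_outerCell_subset {L M : ℝ} (hL : 0 < L) {N : ℕ} (hN : M * L ≤ N) {k : ℤ}
    (hk : (N : ℤ) < |k|) :
    Ioo (outerCell k / L) ((outerCell k + 1) / L) ⊆ {ξ | M < |ξ|} := by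
  intro ξ hξ
  rw [mem_Ioo, div_lt_iff₀ hL, lt_div_iff₀ hL] at hξ
  rw [mem_ofPred_eq, ← mul_lt_mul_iff_of_pos_right hL]
  unfold outerCell at hξ
  rcases lt_or_gt_of_ne (show k ≠ 0 by rintro rfl; simp at hk; omega) with hneg | hpos
  · have : k + 1 ≤ -(N : ℤ) := by rw [abs_of_neg hneg] at hk; omega
    have : (k : ℝ) + 1 ≤ -N := by exact_mod_cast this
    rw [if_neg (by omega)] at hξ
    nlinarith [mul_le_mul_of_nonneg_right (neg_le_abs ξ) hL.le]
  · have : (N : ℤ) + 1 ≤ k := by rw [abs_of_pos hpos] at hk; omega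
    have : (N : ℝ) + 1 ≤ k := by exact_mod_cast this
    rw [if_pos hpos] at hξ
    push_cast at hξ
    nlinarith [mul_le_mul_of_nonneg_right (le_abs_self ξ) hL.le]

theorem riemannSum_tail_le {G : ℝ → ℝ} (hG0 : ∀ x, 0 ≤ G x) (hG : Differentiable ℝ G)
    (hGi : Integrable G) (hG'i : Integrable (deriv G)) {L M : ℝ} (hL : 0 < L) {N : ℕ}
    (hN : M * L ≤ N) :
    1 / L * ∑' k : {k : ℤ // (N : ℤ) < |k|}, G (k / L)
      ≤ (∫ ξ in {ξ : ℝ | M < |ξ|}, G ξ) + 1 / L * ∫ ξ, |deriv G ξ| := by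
  set cell : {k : ℤ // (N : ℤ) < |k|} → Set ℝ := fun k =>
    Ioo (outerCell k / L) ((outerCell k + 1) / L)
  have hcell : ∀ k, MeasurableSet (cell k) := fun k => measurableSet_Ioo
  have hdisj : Pairwise (Disjoint on cell) := by
    have := (pairwise_disjoint_Ioo_add_zsmul (0 : ℝ) L⁻¹).comp_of_injective
      (f := fun k : {k : ℤ // (N : ℤ) < |k|} => outerCell k) fun k k' h =>
        Subtype.ext (outerCell_injOn (abs_pos.1 (k.2.trans_le' (by positivity)))
          (abs_pos.1 (k'.2.trans_le' (by positivity))) h)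
    simpa [cell, zsmul_eq_mul, div_eq_mul_inv, onFun] using this
  have hterm : ∀ k : {k : ℤ // (N : ℤ) < |k|}, 1 / L * G (k / L)
      ≤ (∫ x in cell k, G x) + 1 / L * ∫ x in cell k, |deriv G x| := by
    intro k
    have := mul_le_setIntegral_Ioo_add hG hG'i.integrableOn (div_mem_Icc_outerCell hL k)
    rwa [← sub_div, add_sub_cancel_left] at this
  rw [← tsum_mul_left]
  have hbound : 0 ≤ (∫ ξ in {ξ : ℝ | M < |ξ|}, G ξ) + 1 / L * ∫ ξ, |deriv G ξ| :=
    add_nonneg (integral_nonneg hG0)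
      (mul_nonneg (by positivity) (integral_nonneg fun _ => abs_nonneg _))
  refine tsum_le_of_sum_le' hbound fun s => ?_
  calc ∑ k ∈ s, 1 / L * G (k / L)
      ≤ ∑ k ∈ s, ((∫ x in cell k, G x) + 1 / L * ∫ x in cell k, |deriv G x|) :=
        Finset.sum_le_sum fun k _ => hterm k
    _ = ∑ k ∈ s, (∫ x in cell k, G x) + 1 / L * ∑ k ∈ s, ∫ x in cell k, |deriv G x| := by
        rw [Finset.sum_add_distrib, Finset.mul_sum]
    _ ≤ _ := by
        gcongr
        · exact sum_setIntegral_le_setIntegral hG0 hGi hcell hdisj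
            (fun k => Ioo_outerCell_subset hL hN k.2) s
        · rw [← setIntegral_univ]
          exact sum_setIntegral_le_setIntegral (fun _ => abs_nonneg _) hG'i.abs hcell hdisj
            (fun _ => subset_univ _) s

theorem limsup_le_of_le_add_div {u L : ℕ → ℝ} {A C : ℝ} (hu : ∀ n, 0 ≤ u n)
    (hL : Tendsto L atTop atTop) (h : ∀ᶠ n in atTop, u n ≤ A + 1 / L n * C) :
    limsup u atTop ≤ A := by
  have hv : Tendsto (fun n => A + 1 / L n * C) atTop (𝓝 A) := by
    simpa using tendsto_const_nhds.add (hL.inv_tendsto_atTop.mul_const C)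
  calc limsup u atTop ≤ limsup (fun n => A + 1 / L n * C) atTop :=
        limsup_le_limsup h (isCoboundedUnder_le_of_le atTop hu) hv.isBoundedUnder_le
    _ = A := hv.limsup_eq

theorem integrable_deriv_sq_norm {E : Type*} [NormedAddCommGroup E] [InnerProductSpace ℝ E]
    {F F' : ℝ → E} (hF : ∀ x, HasDerivAt F (F' x) x) (hF2 : Integrable fun x => ‖F x‖ ^ 2)
    (hF'2 : Integrable fun x => ‖F' x‖ ^ 2) :
    Integrable (deriv fun x => ‖F x‖ ^ 2) := by
  refine (hF2.add hF'2).mono' (measurable_deriv _).aestronglyMeasurable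
    (Eventually.of_forall fun x => ?_)
  rw [(hF x).norm_sq.deriv, Real.norm_eq_abs, abs_mul, abs_two, Pi.add_apply]
  nlinarith [abs_real_inner_le_norm (F x) (F' x), two_mul_le_add_sq ‖F x‖ ‖F' x‖]

theorem hasSum_sq_norm_fourier_add_div {g : ℝ → ℂ} {a b : ℝ} (hab : a < b)
    (hg : MemLp g 2 (volume.restrict (Ioc a b))) (hsupp : support g ⊆ Ioc a b) (t : ℝ) :
    HasSum (fun n : ℤ => ‖𝓕 g (t + n / (b - a))‖ ^ 2) ((b - a) * ∫ x in a..b, ‖g x‖ ^ 2) := by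
  have hT : 0 < b - a := sub_pos.2 hab
  set gₜ : ℝ → ℂ := fun x => Complex.exp (↑(-2 * π * x * t) * I) * g x
  have hnorm : ∀ x, ‖gₜ x‖ = ‖g x‖ := fun x => by
    rw [norm_mul, Complex.norm_exp_ofReal_mul_I, one_mul]
  have hgt : MemLp gₜ 2 (volume.restrict (Ioc a b)) :=
    hg.of_le ((Continuous.aestronglyMeasurable (by fun_prop)).mul hg.1)
      (Eventually.of_forall fun x => (hnorm x).le)
  have hcoeff : ∀ n : ℤ, fourierCoeffOn hab gₜ n = (b - a)⁻¹ * 𝓕 g (t + n / (b - a)) := by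
    intro n
    rw [fourierCoeffOn_eq_integral, Real.fourier_real_eq_integral_exp_smul,
      intervalIntegral.integral_of_le hab.le, ← integral_indicator measurableSet_Ioc,
      Complex.real_smul, one_div, Complex.ofReal_inv]
    congr 1
    refine integral_congr_ae (Eventually.of_forall fun x => ?_)
    by_cases hx : x ∈ Ioc a b
    · simp only [indicator_of_mem hx, fourier_coe_apply, gₜ, smul_eq_mul, ← mul_assoc,
        ← Complex.exp_add]
      have : (b : ℂ) - a ≠ 0 := by exact_mod_cast hT.ne'
      congr 2
      push_cast
      field_simp
      ring
    · have : g x = 0 := notMem_support.1 fun h => hx (hsupp h)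
      simp [indicator_of_notMem hx, this]
  have hterm : ∀ n : ℤ,
      ‖𝓕 g (t + n / (b - a))‖ ^ 2 = (b - a) ^ 2 * ‖fourierCoeffOn hab gₜ n‖ ^ 2 := by
    intro n
    rw [hcoeff, norm_mul, mul_pow, Complex.norm_real, norm_inv, Real.norm_of_nonneg hT.le,
      ← mul_assoc, inv_pow, mul_inv_cancel₀ (by positivity), one_mul]
  simp only [hterm, ← hnorm]
  have h := (hasSum_sq_fourierCoeffOn hab hgt).mul_left ((b - a) ^ 2)
  rwa [smul_eq_mul, ← mul_assoc, show (b - a) ^ 2 * (b - a)⁻¹ = b - a by field_simp] at h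

theorem integrable_sq_norm_fourier {g : ℝ → ℂ} {a b : ℝ} (hab : a < b)
    (hg : MemLp g 2 (volume.restrict (Ioc a b))) (hsupp : support g ⊆ Ioc a b) :
    Integrable (fun ξ => ‖𝓕 g ξ‖ ^ 2) := by
  have hh : 0 < (b - a)⁻¹ := inv_pos.2 (sub_pos.2 hab)
  set h := (b - a)⁻¹
  have hgi : Integrable g :=
    (integrableOn_iff_integrable_of_support_subset hsupp).1 (hg.integrable one_le_two)
  have hcont : Continuous (𝓕 g) :=
    VectorFourier.fourierIntegral_continuous Real.continuous_fourierChar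
      (innerSL ℝ).continuous₂ hgi
  set Φ : ℝ → ℝ≥0∞ := fun ξ => ENNReal.ofReal (‖𝓕 g ξ‖ ^ 2)
  have hperiod : ∀ x, ∑' γ : AddSubgroup.zmultiples h, Φ (γ +ᵥ x)
      ≤ ENNReal.ofReal ((b - a) * ∫ x in a..b, ‖g x‖ ^ 2) := by
    intro x
    have hsurj : Surjective fun n : ℤ =>
        (⟨n • h, AddSubgroup.zsmul_mem_zmultiples h n⟩ : AddSubgroup.zmultiples h) := by
      rintro ⟨γ, hγ⟩
      obtain ⟨n, rfl⟩ := AddSubgroup.mem_zmultiples_iff.1 hγ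
      exact ⟨n, rfl⟩
    refine (ENNReal.tsum_le_tsum_comp_of_surjective hsurj _).trans_eq ?_
    have hsum := hasSum_sq_norm_fourier_add_div hab hg hsupp x
    rw [← hsum.tsum_eq, ENNReal.ofReal_tsum_of_nonneg (fun _ => by positivity) hsum.summable]
    refine tsum_congr fun n => ?_
    simp only [Φ, AddSubgroup.vadd_def, vadd_eq_add, zsmul_eq_mul, h, div_eq_mul_inv]
    ring_nf
  refine ⟨(hcont.norm.pow 2).aestronglyMeasurable, ?_⟩
  rw [hasFiniteIntegral_iff_ofReal (Eventually.of_forall fun _ => by positivity)]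
  have hfd := isAddFundamentalDomain_Ioc hh 0
  calc ∫⁻ ξ, Φ ξ = ∫⁻ x in Ioc 0 (0 + h), ∑' γ : AddSubgroup.zmultiples h, Φ (γ +ᵥ x) := by
        rw [hfd.lintegral_eq_tsum'', lintegral_tsum fun γ => ?_]
        exact (ENNReal.measurable_ofReal.comp
          ((hcont.norm.pow 2).measurable.comp (measurable_const_add _))).aemeasurable
    _ ≤ ∫⁻ x in Ioc 0 (0 + h), ENNReal.ofReal ((b - a) * ∫ x in a..b, ‖g x‖ ^ 2) :=
        lintegral_mono hperiod
    _ < ⊤ := by simp [ENNReal.mul_lt_top]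

theorem fourierT_eq_fourier (g : ℝ → ℝ) (ω : ℝ) :
    fourierT g ω = ((2 * π)⁻¹ : ℂ) * 𝓕 (fun x => (g x : ℂ)) (ω / (2 * π)) := by
  rw [fourierT, Real.fourier_real_eq_integral_exp_smul, one_div]
  congr 1
  refine integral_congr_ae (Eventually.of_forall fun x => ?_)
  have : (π : ℂ) ≠ 0 := ofReal_ne_zero.2 pi_ne_zero
  simp only [smul_eq_mul]
  push_cast
  field_simp

theorem hasDerivAt_fourierT {g : ℝ → ℝ} (hg : Integrable g) (hg' : Integrable fun x => x * g x)
    (ω : ℝ) : HasDerivAt (fourierT g) (-I * fourierT (fun x => x * g x) ω) ω := by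
  have hπ : (π : ℂ) ≠ 0 := ofReal_ne_zero.2 pi_ne_zero
  have h𝓕 := Real.hasDerivAt_fourier (f := fun x => (g x : ℂ)) hg.ofReal
    (by simpa using (hg'.ofReal (𝕜 := ℂ))) (ω / (2 * π))
  have := (h𝓕.scomp ω ((hasDerivAt_id ω).div_const (2 * π))).const_mul ((2 * π)⁻¹ : ℂ)
  refine (this.congr_deriv ?_).congr_of_eventuallyEq
    (Eventually.of_forall fun y => fourierT_eq_fourier g y)
  rw [fourierT_eq_fourier, Real.fourier_real_eq_integral_exp_smul,
    Real.fourier_real_eq_integral_exp_smul, ← integral_const_mul, ← integral_const_mul,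
    ← integral_smul, ← integral_const_mul]
  congr 1
  ext x
  simp only [smul_eq_mul, Complex.real_smul]
  push_cast
  field_simp

theorem integrable_sq_norm_fourierT {g : ℝ → ℝ} (hg : Continuous g)
    (hs : HasCompactSupport g) : Integrable fun ξ => ‖fourierT g ξ‖ ^ 2 := by
  obtain ⟨l, hl⟩ := hs.isCompact.bddBelow
  obtain ⟨u, hu⟩ := hs.isCompact.bddAbove
  have hlu : l - 1 < max l u := (sub_one_lt l).trans_le (le_max_left l u)
  have hsupp : support (fun x => (g x : ℂ)) ⊆ Ioc (l - 1) (max l u) := fun x hx =>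
    have hx' : x ∈ tsupport g := subset_tsupport g (by simpa using hx)
    ⟨by linarith [hl hx'], le_max_of_le_right (hu hx')⟩
  have hL2 : MemLp (fun x => (g x : ℂ)) 2 (volume.restrict (Ioc (l - 1) (max l u))) :=
    ((continuous_ofReal.comp hg).memLp_of_hasCompactSupport
      (hs.comp_left ofReal_zero)).restrict _
  refine (((integrable_sq_norm_fourier hlu hL2 hsupp).comp_div
    (by positivity : 2 * π ≠ 0)).const_mul (‖((2 * π)⁻¹ : ℂ)‖ ^ 2)).congr
    (Eventually.of_forall fun ξ => ?_)
  simp only [fourierT_eq_fourier, norm_mul, mul_pow]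

theorem stmt_5_general (f : ℝ → ℝ) (hf : Continuous f) (hsupp : HasCompactSupport f)
    (α : ℝ) (hα1 : α < 1)
    (M : ℝ) (N : ℕ → ℕ)
    (hN : ∀ᶠ n : ℕ in atTop, M * (n : ℝ) ^ (1 - α) ≤ (N n : ℝ)) :
    Filter.limsup (fun n : ℕ =>
        (1 / (n : ℝ) ^ (1 - α)) *
          ∑' k : {k : ℤ // (N n : ℤ) < |k|},
            ‖fourierT f ((k : ℤ) / (n : ℝ) ^ (1 - α))‖ ^ 2)
      atTop
      ≤ ∫ ξ in {ξ : ℝ | M < |ξ|}, ‖fourierT f ξ‖ ^ 2 := by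
  have hxf : Continuous fun x => x * f x := continuous_id.mul hf
  have hxfs : HasCompactSupport fun x => x * f x := hsupp.mul_left
  have hF := hasDerivAt_fourierT (hf.integrable_of_hasCompactSupport hsupp)
    (hxf.integrable_of_hasCompactSupport hxfs)
  have hF2 := integrable_sq_norm_fourierT hf hsupp
  have hF'2 : Integrable fun ξ => ‖-I * fourierT (fun x => x * f x) ξ‖ ^ 2 := by
    simpa using integrable_sq_norm_fourierT hxf hxfs
  refine limsup_le_of_le_add_div (C := ∫ ξ, |deriv (fun ξ => ‖fourierT f ξ‖ ^ 2) ξ|)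
    (fun n => mul_nonneg (by positivity) (tsum_nonneg fun _ => by positivity))
    ((tendsto_rpow_atTop (sub_pos.2 hα1)).comp tendsto_natCast_atTop_atTop) ?_
  filter_upwards [hN, eventually_gt_atTop 0] with n hNn hn
  exact riemannSum_tail_le (fun _ => by positivity) (fun ξ => (hF ξ).norm_sq.differentiableAt) hF2
    (integrable_deriv_sq_norm hF hF2 hF'2) (by positivity) hNn

/-- Tail estimate: if `N_n ≥ M n^{1-α}` eventually, then the tail of the Riemann sum of
`|F f|²` beyond `N_n` is asymptotically bounded by `∫_{|ξ|>M} |F f(ξ)|² dξ`. -/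
theorem stmt_5 (f : ℝ → ℝ) (hf : Continuous f) (hsupp : HasCompactSupport f)
    (hFc : Continuous (fourierT f))
    (hint : Integrable (fun ξ : ℝ => ‖fourierT f ξ‖^2 * (1 + |ξ|)))
    (α : ℝ) (hα0 : 0 < α) (hα1 : α < 1)
    (M : ℝ) (hM : 0 < M) (N : ℕ → ℕ)
    (hN : ∀ᶠ n : ℕ in atTop, M * (n : ℝ) ^ (1 - α) ≤ (N n : ℝ)) :
    Filter.limsup (fun n : ℕ =>
        (1 / (n : ℝ) ^ (1 - α)) *
          ∑' k : {k : ℤ // (N n : ℤ) < |k|},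
            ‖fourierT f ((k : ℤ) / (n : ℝ) ^ (1 - α))‖ ^ 2)
      atTop
      ≤ ∫ ξ in {ξ : ℝ | M < |ξ|}, ‖fourierT f ξ‖ ^ 2 :=
  stmt_5_general f hf hsupp α hα1 M N hN
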